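/- arXiv:1602.08729 — 4 statements merged into one kernel-verified Lean document; each statement's English description precedes it below -/
import Mathlib

section
/- (Proposition 4.2, convergence rate of the Douglas–Rachford scheme). Let H be a finite-dimensional real inner product space, K = H × H, D, E : H → Set H maximally monotone with a primal-dual solution pair (x⋆, y⋆) (−y⋆ ∈ D x⋆ and y⋆ ∈ E x⋆), γ > 0, θ = 2, and let (x_n), (x̄_n), (r_n), (s_n) satisfy s_n − x̄_n ∈ γ D x̄_n; 2x̄_n − s_n − r_n ∈ γ E r_n; s_{n+1} = s_n + ρ_n(r_n − x̄_n); x_{n+1} = x_n + ρ_n(x̄_n − x_n), with 0 < a ≤ ρ_n ≤ b < 2 for all n. Define P : K → K by P(x, y) = (γ⁻¹x − y, −x + γy), let Q be the orthogonal projection of K onto the range of P, R = P + Id − Q, z_n = (x_n, γ⁻¹(x_n − s_n)), and z⋆ = (x⋆, y⋆). Then there exists τ > 0 such that for all n, ‖s_{n+1} − s_n‖² ≤ (γ/(τ(n+1)))·‖Q z₀ − Q z⋆‖_R², and (n+1)·‖s_{n+1} − s_n‖² → 0 as n → ∞. -/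
open scoped InnerProductSpace
open Filter Topology

/-- A set-valued operator is monotone. -/
def IsMonotoneSet {H : Type*} [NormedAddCommGroup H] [InnerProductSpace ℝ H]
    (A : H → Set H) : Prop :=
  ∀ x y u v, u ∈ A x → v ∈ A y → (0:ℝ) ≤ ⟪x - y, u - v⟫_ℝ

/-- A set-valued operator is maximally monotone. -/
def IsMaxMonotone {H : Type*} [NormedAddCommGroup H] [InnerProductSpace ℝ H]
    (A : H → Set H) : Prop :=
  IsMonotoneSet A ∧ ∀ B : H → Set H, IsMonotoneSet B → (∀ x, A x ⊆ B x) → ∀ x, B x = A x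

/-- The inner product on `K = H × H`: `⟨(x,y),(x',y')⟩ = ⟨x,x'⟩ + ⟨y,y'⟩`. -/
noncomputable def kinner {H : Type*} [NormedAddCommGroup H] [InnerProductSpace ℝ H]
    (w w' : H × H) : ℝ :=
  ⟪w.1, w'.1⟫_ℝ + ⟪w.2, w'.2⟫_ℝ

/-!
Put `s⋆ = x⋆ - γ y⋆`. Monotonicity of `D` and `E` makes `s ↦ J_{γD} s - J_{γE} (2 J_{γD} s - s)`
firmly nonexpansive, and `s⋆` is a fixed point of the Douglas–Rachford iteration. This yields the
Fejér inequality `‖sₙ₊₁ - s⋆‖² ≤ ‖sₙ - s⋆‖² - ρₙ (2 - ρₙ) ‖rₙ - x̄ₙ‖²` and that the residuals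
`‖rₙ - x̄ₙ‖` are nonincreasing. A nonincreasing sequence with bounded partial sums satisfies
`(n + 1) uₙ ≤ ∑_{k ≤ n} u_k` and `n uₙ → 0`; since `sₙ₊₁ - sₙ = ρₙ (rₙ - x̄ₙ)`, both claims follow.
The range of `P` is the graph `{(c, -γ c)}`, on which the `R`-norm is explicit:
`‖Q z₀ - Q z⋆‖_R² = γ⁻¹ ‖s₀ - s⋆‖²`.
-/

open Finset

theorem sum_range_le_of_le_sub_succ {u h : ℕ → ℝ} (hh : ∀ n, 0 ≤ h n)
    (huh : ∀ n, u n ≤ h n - h (n + 1)) (n : ℕ) : ∑ k ∈ range n, u k ≤ h 0 :=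
  calc ∑ k ∈ range n, u k ≤ ∑ k ∈ range n, (h k - h (k + 1)) := sum_le_sum fun k _ => huh k
    _ = h 0 - h n := sum_range_sub' h n
    _ ≤ h 0 := sub_le_self _ (hh n)

theorem Antitone.succ_mul_le_sum_range {u : ℕ → ℝ} (hu : Antitone u) (n : ℕ) :
    ((n : ℝ) + 1) * u n ≤ ∑ k ∈ range (n + 1), u k := by
  simpa using card_nsmul_le_sum (range (n + 1)) u (u n) fun k hk =>
    hu (Nat.lt_succ_iff.mp (mem_range.mp hk))

theorem Antitone.tendsto_succ_mul_of_summable {u : ℕ → ℝ} (hu : Antitone u) (hsum : Summable u) :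
    Tendsto (fun n : ℕ => ((n : ℝ) + 1) * u n) atTop (𝓝 0) := by
  have hu0 : ∀ n, 0 ≤ u n := hu.le_of_tendsto hsum.tendsto_atTop_zero
  have tail : ∀ m j : ℕ, ((j : ℝ) + 1) * u (j + m) ≤ ∑' k, u (k + m) := fun m j =>
    calc ((j : ℝ) + 1) * u (j + m) = ∑ _k ∈ range (j + 1), u (j + m) := by simp
      _ ≤ ∑ k ∈ range (j + 1), u (k + m) :=
        sum_le_sum fun k hk => hu (by have := mem_range.mp hk; omega)
      _ ≤ ∑' k, u (k + m) :=
        ((summable_nat_add_iff m).2 hsum).sum_le_tsum _ fun k _ => hu0 (k + m)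
  refine tendsto_order.2 ⟨fun a ha => Eventually.of_forall fun n => ha.trans_le (by
    have := hu0 n; positivity), fun ε hε => ?_⟩
  obtain ⟨m, hm⟩ := ((tendsto_sum_nat_add u).eventually (gt_mem_nhds (half_pos hε))).exists
  have hmu : ∀ᶠ n in atTop, (m : ℝ) * u n < ε / 2 := by
    have := hsum.tendsto_atTop_zero.const_mul (m : ℝ)
    rw [mul_zero] at this
    exact this.eventually (gt_mem_nhds (half_pos hε))
  filter_upwards [hmu, eventually_ge_atTop m] with n hn hmn
  obtain ⟨j, rfl⟩ := Nat.exists_eq_add_of_le' hmn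
  calc ((↑(j + m) : ℝ) + 1) * u (j + m) = ((j : ℝ) + 1) * u (j + m) + m * u (j + m) := by
        push_cast; ring
    _ < ε / 2 + ε / 2 := add_lt_add_of_le_of_lt ((tail m j).trans hm.le) hn
    _ = ε := add_halves ε

section InnerProductSpace

variable {H : Type*} [NormedAddCommGroup H] [InnerProductSpace ℝ H]

theorem norm_add_smul_sub_sq_le {s t g : H} {ρ : ℝ} (hρ : 0 ≤ ρ)
    (hg : ‖g‖ ^ 2 ≤ -⟪g, s - t⟫_ℝ) :
    ‖s + ρ • g - t‖ ^ 2 ≤ ‖s - t‖ ^ 2 - ρ * (2 - ρ) * ‖g‖ ^ 2 := by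
  rw [show s + ρ • g - t = (s - t) + ρ • g by abel, norm_add_sq_real, real_inner_smul_right,
    norm_smul, Real.norm_eq_abs, mul_pow, sq_abs, real_inner_comm]
  nlinarith

theorem norm_add_le_of_norm_sq_le_neg_smul_inner {g d : H} {ρ : ℝ} (hρ₀ : 0 < ρ) (hρ₂ : ρ ≤ 2)
    (hd : ‖d‖ ^ 2 ≤ -(ρ * ⟪g, d⟫_ℝ)) : ‖g + d‖ ≤ ‖g‖ := by
  have hgd : ⟪g, d⟫_ℝ ≤ 0 := by nlinarith [sq_nonneg ‖d‖]
  have : ‖g + d‖ ^ 2 ≤ ‖g‖ ^ 2 := by rw [norm_add_sq_real]; nlinarith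
  exact (pow_le_pow_iff_left₀ (norm_nonneg _) (norm_nonneg _) two_ne_zero).1 this

/-- `p = J_{γD} s` and `q = J_{γE} (2p - s)`, with the resolvents written relationally. -/
def IsDouglasRachfordTriple (D E : H → Set H) (γ : ℝ) (s p q : H) : Prop :=
  (∃ u ∈ D p, s - p = γ • u) ∧ ∃ v ∈ E q, (2 : ℝ) • p - s - q = γ • v

theorem IsDouglasRachfordTriple.of_solution {D E : H → Set H} {x y : H} (hD : -y ∈ D x)
    (hE : y ∈ E x) (γ : ℝ) : IsDouglasRachfordTriple D E γ (x - γ • y) x x :=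
  ⟨⟨-y, hD, by module⟩, ⟨y, hE, by module⟩⟩

theorem IsDouglasRachfordTriple.norm_sub_sq_le_inner {D E : H → Set H} (hD : IsMonotoneSet D)
    (hE : IsMonotoneSet E) {γ : ℝ} (hγ : 0 ≤ γ) {s₁ s₂ p₁ p₂ q₁ q₂ : H}
    (h₁ : IsDouglasRachfordTriple D E γ s₁ p₁ q₁) (h₂ : IsDouglasRachfordTriple D E γ s₂ p₂ q₂) :
    ‖(p₁ - p₂) - (q₁ - q₂)‖ ^ 2 ≤ ⟪(p₁ - p₂) - (q₁ - q₂), s₁ - s₂⟫_ℝ := by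
  obtain ⟨⟨u₁, hu₁, e₁⟩, ⟨v₁, hv₁, f₁⟩⟩ := h₁
  obtain ⟨⟨u₂, hu₂, e₂⟩, ⟨v₂, hv₂, f₂⟩⟩ := h₂
  have hDp : 0 ≤ ⟪p₁ - p₂, (s₁ - p₁) - (s₂ - p₂)⟫_ℝ := by
    rw [e₁, e₂, ← smul_sub, real_inner_smul_right]
    exact mul_nonneg hγ (hD _ _ _ _ hu₁ hu₂)
  have hEq : 0 ≤ ⟪q₁ - q₂, ((2 : ℝ) • p₁ - s₁ - q₁) - ((2 : ℝ) • p₂ - s₂ - q₂)⟫_ℝ := by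
    rw [f₁, f₂, ← smul_sub, real_inner_smul_right]
    exact mul_nonneg hγ (hE _ _ _ _ hv₁ hv₂)
  -- the two monotonicity inequalities add up to exactly the claimed one
  have : ⟪(p₁ - p₂) - (q₁ - q₂), s₁ - s₂⟫_ℝ - ‖(p₁ - p₂) - (q₁ - q₂)‖ ^ 2 =
      ⟪p₁ - p₂, (s₁ - p₁) - (s₂ - p₂)⟫_ℝ +
        ⟪q₁ - q₂, ((2 : ℝ) • p₁ - s₁ - q₁) - ((2 : ℝ) • p₂ - s₂ - q₂)⟫_ℝ := by
    simp only [← real_inner_self_eq_norm_sq, inner_sub_left, inner_sub_right,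
      real_inner_smul_right, real_inner_comm p₁ q₁, real_inner_comm p₁ q₂,
      real_inner_comm p₂ q₁, real_inner_comm p₂ q₂]
    ring
  linarith

namespace DouglasRachford

variable {D E : H → Set H} {γ : ℝ} {s p q : ℕ → H} {ρ : ℕ → ℝ}

theorem residual_antitone (hD : IsMonotoneSet D) (hE : IsMonotoneSet E) (hγ : 0 ≤ γ)
    (htriple : ∀ n, IsDouglasRachfordTriple D E γ (s n) (p n) (q n))
    (hs : ∀ n, s (n + 1) = s n + ρ n • (q n - p n)) (hρ : ∀ n, 0 < ρ n ∧ ρ n ≤ 2) :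
    Antitone fun n => ‖q n - p n‖ := by
  refine antitone_nat_of_succ_le fun n => ?_
  have key := (htriple (n + 1)).norm_sub_sq_le_inner hD hE hγ (htriple n)
  set d := (q (n + 1) - p (n + 1)) - (q n - p n)
  rw [show (p (n + 1) - p n) - (q (n + 1) - q n) = -d by simp only [d]; abel,
    show s (n + 1) - s n = ρ n • (q n - p n) by rw [hs]; abel,
    norm_neg, inner_neg_left, real_inner_smul_right, real_inner_comm] at key
  simpa [d] using norm_add_le_of_norm_sq_le_neg_smul_inner (hρ n).1 (hρ n).2 key

theorem norm_succ_sub_sq_le (hD : IsMonotoneSet D) (hE : IsMonotoneSet E) (hγ : 0 ≤ γ)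
    (htriple : ∀ n, IsDouglasRachfordTriple D E γ (s n) (p n) (q n))
    (hs : ∀ n, s (n + 1) = s n + ρ n • (q n - p n)) {xstar sstar : H}
    (hstar : IsDouglasRachfordTriple D E γ sstar xstar xstar) {n : ℕ} (hρ : 0 ≤ ρ n) :
    ‖s (n + 1) - sstar‖ ^ 2 ≤ ‖s n - sstar‖ ^ 2 - ρ n * (2 - ρ n) * ‖q n - p n‖ ^ 2 := by
  have key := (htriple n).norm_sub_sq_le_inner hD hE hγ hstar
  rw [show (p n - xstar) - (q n - xstar) = -(q n - p n) by abel, norm_neg, inner_neg_left] at key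
  rw [hs]
  exact norm_add_smul_sub_sq_le hρ key

theorem residual_rate (hD : IsMonotoneSet D) (hE : IsMonotoneSet E) (hγ : 0 ≤ γ)
    (htriple : ∀ n, IsDouglasRachfordTriple D E γ (s n) (p n) (q n))
    (hs : ∀ n, s (n + 1) = s n + ρ n • (q n - p n)) {xstar sstar : H}
    (hstar : IsDouglasRachfordTriple D E γ sstar xstar xstar) {a b : ℝ} (ha : 0 < a) (hb : b < 2)
    (hρ : ∀ n, a ≤ ρ n ∧ ρ n ≤ b) :
    (∀ n : ℕ, ((n : ℝ) + 1) * (a * (2 - b) * ‖q n - p n‖ ^ 2) ≤ ‖s 0 - sstar‖ ^ 2) ∧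
      Tendsto (fun n : ℕ => ((n : ℝ) + 1) * ‖q n - p n‖ ^ 2) atTop (𝓝 0) := by
  have hc : 0 < a * (2 - b) := mul_pos ha (by linarith)
  have hanti : Antitone fun n => ‖q n - p n‖ ^ 2 := fun m n hmn =>
    pow_le_pow_left₀ (norm_nonneg _) (residual_antitone hD hE hγ htriple hs
      (fun n => ⟨ha.trans_le (hρ n).1, (hρ n).2.trans hb.le⟩) hmn) 2
  have hdecr : ∀ n,
      a * (2 - b) * ‖q n - p n‖ ^ 2 ≤ ‖s n - sstar‖ ^ 2 - ‖s (n + 1) - sstar‖ ^ 2 := by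
    intro n
    obtain ⟨haρ, hρb⟩ := hρ n
    have hab : a * (2 - b) ≤ ρ n * (2 - ρ n) := by nlinarith
    have := norm_succ_sub_sq_le hD hE hγ htriple hs hstar (ha.le.trans haρ) (n := n)
    nlinarith [mul_le_mul_of_nonneg_right hab (sq_nonneg ‖q n - p n‖)]
  have hpartial := sum_range_le_of_le_sub_succ (fun n => sq_nonneg ‖s n - sstar‖) hdecr
  refine ⟨fun n => ((hanti.const_mul hc.le).succ_mul_le_sum_range n).trans (hpartial _), ?_⟩
  have hsum : Summable fun n => ‖q n - p n‖ ^ 2 :=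
    (summable_mul_left_iff hc.ne').1 (summable_of_sum_range_le (fun n => by positivity) hpartial)
  exact hanti.tendsto_succ_mul_of_summable hsum

end DouglasRachford

section Projection

variable {γ : ℝ} {Pf Q : H × H → H × H}

theorem proj_apply_eq (hγ : γ ≠ 0)
    (hPf : ∀ w : H × H, Pf w = (γ⁻¹ • w.1 - w.2, -w.1 + γ • w.2))
    (hQmem : ∀ w, Q w ∈ Set.range Pf) (hQorth : ∀ w u, kinner (w - Q w) (Pf u) = 0)
    (z : H × H) :
    Q z = ((1 + γ ^ 2)⁻¹ • (z.1 - γ • z.2), -γ • (1 + γ ^ 2)⁻¹ • (z.1 - γ • z.2)) := by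
  obtain ⟨w, hw⟩ := hQmem z
  set c := γ⁻¹ • w.1 - w.2
  -- the range of `P` is the graph `{(c, -γ c)}`
  have hQ : Q z = (c, -γ • c) := by
    rw [← hw, hPf]
    ext
    · rfl
    · change -w.1 + γ • w.2 = -γ • (γ⁻¹ • w.1 - w.2)
      rw [smul_sub, smul_smul, neg_mul, mul_inv_cancel₀ hγ]
      module
  have horth : ∀ d : H, ⟪z.1 - γ • z.2 - (1 + γ ^ 2) • c, d⟫_ℝ = 0 := by
    intro d
    have h := hQorth z (γ • d, 0)
    rw [hQ, hPf] at h
    simp only [kinner, smul_smul, inv_mul_cancel₀ hγ, one_smul, smul_zero, sub_zero,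
      add_zero, Prod.fst_sub, Prod.snd_sub, inner_neg_right, real_inner_smul_right] at h
    simp only [inner_sub_left, real_inner_smul_left] at h ⊢
    linarith
  have hc : c = (1 + γ ^ 2)⁻¹ • (z.1 - γ • z.2) := by
    rw [sub_eq_zero.1 (inner_self_eq_zero.1 (horth _)), smul_smul,
      inv_mul_cancel₀ (by positivity), one_smul]
  rw [hQ, hc]

theorem kinner_proj_sub_proj (hγ : 0 < γ)
    (hPf : ∀ w : H × H, Pf w = (γ⁻¹ • w.1 - w.2, -w.1 + γ • w.2))
    (hQmem : ∀ w, Q w ∈ Set.range Pf) (hQorth : ∀ w u, kinner (w - Q w) (Pf u) = 0)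
    (z z' : H × H) :
    kinner (Q z - Q z') (Pf (Q z - Q z') + (Q z - Q z') - Q (Q z - Q z')) =
      γ⁻¹ * ‖(z.1 - γ • z.2) - (z'.1 - γ • z'.2)‖ ^ 2 := by
  have hQ := proj_apply_eq hγ.ne' hPf hQmem hQorth
  have hpos : (0 : ℝ) < 1 + γ ^ 2 := by positivity
  set d := (z.1 - γ • z.2) - (z'.1 - γ • z'.2)
  set c := (1 + γ ^ 2)⁻¹ • d
  have hw : Q z - Q z' = (c, -γ • c) := by
    rw [hQ z, hQ z']
    ext <;> simp only [Prod.fst_sub, Prod.snd_sub, c, d] <;> module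
  have hfix : Q (c, -γ • c) = (c, -γ • c) := by
    rw [hQ, show c - γ • -γ • c = (1 + γ ^ 2) • c by module, smul_smul,
      inv_mul_cancel₀ hpos.ne', one_smul]
  rw [hw, hfix, add_sub_cancel_right, hPf]
  simp only [kinner, c, inner_sub_right, inner_add_right, inner_neg_right, inner_neg_left,
    real_inner_smul_left, real_inner_smul_right, neg_smul]
  rw [← real_inner_self_eq_norm_sq]
  field_simp
  ring

end Projection

end InnerProductSpace

/-- `Q` is the orthogonal projection of `K = H × H` onto the range of
`P(x,y) = (γ⁻¹x − y, −x + γy)`, `R = P + Id − Q`, `zₙ = (xₙ, γ⁻¹(xₙ − sₙ))`,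
`z⋆ = (x⋆, y⋆)`, and `w₀ = Q z₀ − Q z⋆`, so that `‖Q z₀ − Q z⋆‖_R² = kinner w₀ (R w₀)`. -/
theorem douglas_rachford_rate_general
    {H : Type*} [NormedAddCommGroup H] [InnerProductSpace ℝ H]
    (D E : H → Set H) (hD : IsMaxMonotone D) (hE : IsMaxMonotone E)
    (xstar ystar : H) (hsol₁ : -ystar ∈ D xstar) (hsol₂ : ystar ∈ E xstar)
    (γ : ℝ) (hγ : 0 < γ)
    (x xbar r s : ℕ → H) (ρ : ℕ → ℝ)
    (a b : ℝ) (ha : 0 < a) (hb : b < 2) (hρ : ∀ n, a ≤ ρ n ∧ ρ n ≤ b)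
    (hxbar : ∀ n, ∃ u ∈ D (xbar n), s n - xbar n = γ • u)
    (hr : ∀ n, ∃ v ∈ E (r n), (2:ℝ) • xbar n - s n - r n = γ • v)
    (hs : ∀ n, s (n+1) = s n + ρ n • (r n - xbar n))
    (Pf : H × H → H × H)
    (hPf : ∀ w : H × H, Pf w = (γ⁻¹ • w.1 - w.2, -w.1 + γ • w.2))
    (Q : H × H → H × H)
    (hQmem : ∀ w, Q w ∈ Set.range Pf)
    (hQorth : ∀ w u, kinner (w - Q w) (Pf u) = 0)
    (w₀ : H × H)
    (hw₀ : w₀ = Q (x 0, γ⁻¹ • (x 0 - s 0)) - Q (xstar, ystar)) :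
    ∃ τ > (0:ℝ),
      (∀ n : ℕ, ‖s (n+1) - s n‖ ^ 2 ≤
        γ / (τ * ((n : ℝ) + 1)) * kinner w₀ (Pf w₀ + w₀ - Q w₀)) ∧
      Filter.Tendsto (fun n : ℕ => ((n : ℝ) + 1) * ‖s (n+1) - s n‖ ^ 2)
        Filter.atTop (nhds 0) := by
  obtain ⟨hbound, hlim⟩ := DouglasRachford.residual_rate hD.1 hE.1 hγ.le
    (fun n => ⟨hxbar n, hr n⟩) hs (IsDouglasRachfordTriple.of_solution hsol₁ hsol₂ γ) ha hb hρ
  have hconst : kinner w₀ (Pf w₀ + w₀ - Q w₀) = γ⁻¹ * ‖s 0 - (xstar - γ • ystar)‖ ^ 2 := by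
    rw [hw₀, kinner_proj_sub_proj hγ hPf hQmem hQorth, smul_smul, mul_inv_cancel₀ hγ.ne',
      one_smul, sub_sub_cancel]
  have hstep : ∀ n, ‖s (n + 1) - s n‖ ^ 2 ≤ 4 * ‖r n - xbar n‖ ^ 2 := fun n => by
    rw [hs n, add_sub_cancel_left, norm_smul, mul_pow, Real.norm_eq_abs, sq_abs]
    have := hρ n
    exact mul_le_mul_of_nonneg_right (by nlinarith) (sq_nonneg _)
  have hc : 0 < a * (2 - b) := mul_pos ha (sub_pos.2 hb)
  refine ⟨a * (2 - b) / 4, by positivity, fun n => ?_, ?_⟩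
  · have hτ : 0 < a * (2 - b) / 4 * ((n : ℝ) + 1) := by positivity
    rw [hconst, div_mul_eq_mul_div, ← mul_assoc, mul_inv_cancel₀ hγ.ne', one_mul,
      le_div_iff₀ hτ]
    nlinarith [hbound n, hstep n]
  · exact squeeze_zero (fun n => by positivity)
      (fun n => by nlinarith [hstep n] : ∀ n : ℕ, _ ≤ 4 * (((n : ℝ) + 1) * ‖r n - xbar n‖ ^ 2))
      (by simpa using hlim.const_mul 4)

/-- Proposition 4.2: convergence rate of the Douglas–Rachford scheme (case θ = 2).
`Q` is the orthogonal projection of `K = H × H` onto the range of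
`P(x,y) = (γ⁻¹x − y, −x + γy)`, `R = P + Id − Q`, `zₙ = (xₙ, γ⁻¹(xₙ − sₙ))`,
`z⋆ = (x⋆, y⋆)`, and `w₀ = Q z₀ − Q z⋆`, so that `‖Q z₀ − Q z⋆‖_R² = kinner w₀ (R w₀)`. -/
theorem douglas_rachford_rate
    {H : Type*} [NormedAddCommGroup H] [InnerProductSpace ℝ H] [FiniteDimensional ℝ H]
    (D E : H → Set H) (hD : IsMaxMonotone D) (hE : IsMaxMonotone E)
    (xstar ystar : H) (hsol₁ : -ystar ∈ D xstar) (hsol₂ : ystar ∈ E xstar)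
    (γ : ℝ) (hγ : 0 < γ)
    (x xbar r s : ℕ → H) (ρ : ℕ → ℝ)
    (a b : ℝ) (ha : 0 < a) (hb : b < 2) (hρ : ∀ n, a ≤ ρ n ∧ ρ n ≤ b)
    (hxbar : ∀ n, ∃ u ∈ D (xbar n), s n - xbar n = γ • u)
    (hr : ∀ n, ∃ v ∈ E (r n), (2:ℝ) • xbar n - s n - r n = γ • v)
    (hs : ∀ n, s (n+1) = s n + ρ n • (r n - xbar n))
    (hx : ∀ n, x (n+1) = x n + ρ n • (xbar n - x n))
    (Pf : H × H → H × H)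
    (hPf : ∀ w : H × H, Pf w = (γ⁻¹ • w.1 - w.2, -w.1 + γ • w.2))
    (Q : H × H → H × H)
    (hQmem : ∀ w, Q w ∈ Set.range Pf)
    (hQorth : ∀ w u, kinner (w - Q w) (Pf u) = 0)
    (w₀ : H × H)
    (hw₀ : w₀ = Q (x 0, γ⁻¹ • (x 0 - s 0)) - Q (xstar, ystar)) :
    ∃ τ > (0:ℝ),
      (∀ n : ℕ, ‖s (n+1) - s n‖ ^ 2 ≤
        γ / (τ * ((n : ℝ) + 1)) * kinner w₀ (Pf w₀ + w₀ - Q w₀)) ∧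
      Filter.Tendsto (fun n : ℕ => ((n : ℝ) + 1) * ‖s (n+1) - s n‖ ^ 2)
        Filter.atTop (nhds 0) :=
  douglas_rachford_rate_general D E hD hE xstar ystar hsol₁ hsol₂ γ hγ x xbar r s ρ a b ha hb hρ
    hxbar hr hs Pf hPf Q hQmem hQorth w₀ hw₀
end

section
/- (Lemma 5.2, strong positivity of the preconditioner P). Let H and G be real Hilbert spaces, K = H × G with inner product ⟨(x,y),(x′,y′)⟩ = ⟨x,x′⟩ + ⟨y,y′⟩, and L : H → G a bounded linear operator with adjoint L*. Let γ₁, γ₂ > 0 and θ ≥ 0, and define P : K → K by P(x, y) = (γ₁⁻¹x − (θ/2)L*y, −(θ/2)Lx + γ₂⁻¹y). If γ₁⁻¹ − (γ₂/4)θ²‖L‖² > 0, then τ := ½γ₁⁻¹ + ½γ₂⁻¹ − ½√(θ²‖L‖² + (γ₁⁻¹ − γ₂⁻¹)²) is positive and ⟨z, P z⟩ ≥ τ‖z‖² for all z ∈ K. -/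
open scoped InnerProductSpace

/-- Lemma 5.2: strong positivity of the preconditioner
`P(x, y) = (γ₁⁻¹x − (θ/2)L*y, −(θ/2)Lx + γ₂⁻¹y)` on `K = H × G`, where
`⟨(x,y), P(x,y)⟩ = ⟨x, γ₁⁻¹x − (θ/2)L*y⟩ + ⟨y, −(θ/2)Lx + γ₂⁻¹y⟩` and
`‖(x,y)‖² = ‖x‖² + ‖y‖²`. -/
theorem preconditioner_strongly_positive
    {H G : Type*} [NormedAddCommGroup H] [InnerProductSpace ℝ H] [CompleteSpace H]
    [NormedAddCommGroup G] [InnerProductSpace ℝ G] [CompleteSpace G]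
    (L : H →L[ℝ] G) (γ₁ γ₂ θ : ℝ) (hγ₁ : 0 < γ₁) (hγ₂ : 0 < γ₂) (hθ : 0 ≤ θ)
    (hcond : 0 < γ₁⁻¹ - γ₂ / 4 * θ ^ 2 * ‖L‖ ^ 2)
    (τ : ℝ)
    (hτdef : τ = 1/2 * γ₁⁻¹ + 1/2 * γ₂⁻¹ -
      1/2 * Real.sqrt (θ ^ 2 * ‖L‖ ^ 2 + (γ₁⁻¹ - γ₂⁻¹) ^ 2)) :
    0 < τ ∧ ∀ (x : H) (y : G),
      τ * (‖x‖ ^ 2 + ‖y‖ ^ 2) ≤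
        ⟪x, γ₁⁻¹ • x - (θ/2) • (ContinuousLinearMap.adjoint L) y⟫_ℝ +
        ⟪y, -((θ/2) • L x) + γ₂⁻¹ • y⟫_ℝ := by
  set a := γ₁⁻¹ with ha
  set b := γ₂⁻¹ with hb
  have ha0 : 0 < a := inv_pos.mpr hγ₁
  have hb0 : 0 < b := inv_pos.mpr hγ₂
  set s := θ * ‖L‖ with hs
  have hs0 : 0 ≤ s := mul_nonneg hθ (norm_nonneg _)
  have hsq : θ ^ 2 * ‖L‖ ^ 2 = s ^ 2 := by ring
  set d := Real.sqrt (s ^ 2 + (a - b) ^ 2) with hd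
  have hd0 : 0 ≤ d := Real.sqrt_nonneg _
  have hd2 : d ^ 2 = s ^ 2 + (a - b) ^ 2 := by
    rw [hd]; exact Real.sq_sqrt (by positivity)
  have hτ : τ = 1/2 * a + 1/2 * b - 1/2 * d := by rw [hτdef, hsq]
  -- 4ab > s^2
  have hab : s ^ 2 < 4 * a * b := by
    have hγ₂b : γ₂ = b⁻¹ := by rw [hb, inv_inv]
    rw [hγ₂b] at hcond
    have h : b⁻¹ * s ^ 2 < 4 * a := by nlinarith [hcond, hsq]
    have h2 : b * (b⁻¹ * s ^ 2) < b * (4 * a) := by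
      exact mul_lt_mul_of_pos_left h hb0
    rw [← mul_assoc, mul_inv_cancel₀ hb0.ne', one_mul] at h2
    linarith
  have hdab : d < a + b := by
    nlinarith [hd2, hd0, hab, ha0, hb0]
  have hτpos : 0 < τ := by rw [hτ]; linarith
  -- a - τ ≥ 0, b - τ ≥ 0
  have hdge : |a - b| ≤ d := by
    rw [hd]
    refine le_trans ?_ (Real.sqrt_le_sqrt (by nlinarith [sq_nonneg s] : (a-b)^2 ≤ s^2 + (a-b)^2))
    rw [Real.sqrt_sq_eq_abs]
  have haτ : 0 ≤ a - τ := by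
    have := abs_le.mp hdge
    rw [hτ]; linarith [this.1, this.2]
  have hbτ : 0 ≤ b - τ := by
    have := abs_le.mp hdge
    rw [hτ]; linarith [this.1, this.2]
  have hprod : (a - τ) * (b - τ) = s ^ 2 / 4 := by
    rw [hτ]; linear_combination hd2 / 4
  refine ⟨hτpos, fun x y => ?_⟩
  have hLxy : ⟪x, (ContinuousLinearMap.adjoint L) y⟫_ℝ = ⟪L x, y⟫_ℝ :=
    ContinuousLinearMap.adjoint_inner_right L x y
  have hrhs : ⟪x, a • x - (θ/2) • (ContinuousLinearMap.adjoint L) y⟫_ℝ +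
      ⟪y, -((θ/2) • L x) + b • y⟫_ℝ
      = a * ‖x‖ ^ 2 + b * ‖y‖ ^ 2 - θ * ⟪L x, y⟫_ℝ := by
    rw [inner_sub_right, inner_add_right, inner_smul_right, inner_smul_right,
      inner_smul_right, inner_neg_right, inner_smul_right,
      real_inner_self_eq_norm_sq, real_inner_self_eq_norm_sq, hLxy,
      real_inner_comm y (L x)]
    ring
  rw [hrhs]
  have hcs : θ * ⟪L x, y⟫_ℝ ≤ s * (‖x‖ * ‖y‖) := by
    have h1 : ⟪L x, y⟫_ℝ ≤ ‖L x‖ * ‖y‖ := real_inner_le_norm _ _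
    have h2 : ‖L x‖ ≤ ‖L‖ * ‖x‖ := L.le_opNorm x
    have h3 : ⟪L x, y⟫_ℝ ≤ ‖L‖ * ‖x‖ * ‖y‖ :=
      h1.trans (mul_le_mul_of_nonneg_right h2 (norm_nonneg _))
    calc θ * ⟪L x, y⟫_ℝ ≤ θ * (‖L‖ * ‖x‖ * ‖y‖) :=
          mul_le_mul_of_nonneg_left h3 hθ
      _ = s * (‖x‖ * ‖y‖) := by rw [hs]; ring
  have key : τ * (‖x‖ ^ 2 + ‖y‖ ^ 2) ≤ a * ‖x‖ ^ 2 + b * ‖y‖ ^ 2 - s * (‖x‖ * ‖y‖) := by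
    set X := ‖x‖; set Y := ‖y‖
    have hX : 0 ≤ X := norm_nonneg _
    have hY : 0 ≤ Y := norm_nonneg _
    have h1 : Real.sqrt (a - τ) ^ 2 = a - τ := Real.sq_sqrt haτ
    have h2 : Real.sqrt (b - τ) ^ 2 = b - τ := Real.sq_sqrt hbτ
    have h3 : Real.sqrt (a - τ) * Real.sqrt (b - τ) = Real.sqrt (s ^ 2 / 4) := by
      rw [← Real.sqrt_mul haτ, hprod]
    have h4 : Real.sqrt (s ^ 2 / 4) = s / 2 := by
      rw [show s ^ 2 / 4 = (s / 2) ^ 2 by ring, Real.sqrt_sq (by linarith)]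
    have h34 : Real.sqrt (a - τ) * Real.sqrt (b - τ) = s / 2 := h3.trans h4
    have expand : a * X ^ 2 + b * Y ^ 2 - s * (X * Y) - τ * (X ^ 2 + Y ^ 2)
        = (Real.sqrt (a - τ) * X - Real.sqrt (b - τ) * Y) ^ 2 := by
      linear_combination -(X ^ 2 * h1) - Y ^ 2 * h2 + 2 * X * Y * h34
    linarith [sq_nonneg (Real.sqrt (a - τ) * X - Real.sqrt (b - τ) * Y), expand]
  linarith [key, hcs]
end

section
/- (Lemma 5.3, cocoercivity of the smooth part with respect to the P-norm). Let H, G be real Hilbert spaces, K = H × G, L : H → G bounded linear, γ₁, γ₂ > 0, θ ≥ 0 with γ₁⁻¹ − (γ₂/4)θ²‖L‖² > 0, and P(x, y) = (γ₁⁻¹x − (θ/2)L*y, −(θ/2)Lx + γ₂⁻¹y) (so P is τ-strongly positive with τ = ½γ₁⁻¹ + ½γ₂⁻¹ − ½√(θ²‖L‖² + (γ₁⁻¹ − γ₂⁻¹)²), hence invertible). Let h : H → ℝ be convex and Fréchet differentiable with β_h-Lipschitz gradient (β_h > 0) and l⋆ : G → ℝ convex and Fréchet differentiable with β_l-Lipschitz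 gradient (β_l > 0), and define C : K → K by C(x, y) = (∇h(x), ∇l⋆(y)). Then C is β-cocoercive with respect to ‖·‖_P: for all z, z′ ∈ K, ⟨C z − C z′, z − z′⟩ ≥ β⟨C z − C z′, P⁻¹(C z − C z′)⟩, with β = τ·min{β_l⁻¹, β_h⁻¹}. Moreover, if ∇l⋆ ≡ 0 (the case l = ι_{{0}}), the same inequality holds with the larger constant β = β_h⁻¹(γ₁⁻¹ − (γ₂/4)θ²‖L‖²). -/
/-!
By the Baillon–Haddad theorem each component of `C` is cocoercive in the Euclidean norm,
`β⁻¹ ‖∇f x - ∇f y‖² ≤ ⟪∇f x - ∇f y, x - y⟫`. Bounding the cross term `θ ⟪L x, y⟫` by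
`|θ| ‖L‖ ‖x‖ ‖y‖` reduces `⟪w, P w⟫` to a `2 × 2` quadratic form whose smallest eigenvalue is `τ`,
so `P ≥ τ`. For `u = C z - C z'` and `w = P⁻¹ u` this gives `τ ‖w‖² ≤ ⟪u, w⟫ ≤ ‖u‖ ‖w‖`, hence
`τ ⟪u, P⁻¹ u⟫ ≤ ‖u‖²`, and the two estimates combine. When `∇l⋆ = 0` the second row of `P w = u`
forces `w₂ = γ₂ (θ/2) L w₁`, so `⟪u, w⟫ = γ₁⁻¹ ‖w₁‖² - (γ₂/4) θ² ‖L w₁‖²`, and the same argument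
runs in `H` alone with the constant `γ₁⁻¹ - (γ₂/4) θ² ‖L‖²`.
-/

open scoped InnerProductSpace

/-- The smallest eigenvalue of the symmetric matrix `!![a, -b/2; -b/2, d]`, where `c = b²`. -/
noncomputable def minEigenvalue₂ (a d c : ℝ) : ℝ := 1/2 * a + 1/2 * d - 1/2 * √(c + (a - d) ^ 2)

theorem minEigenvalue₂_mul_sq_add_sq_le (a d b s t : ℝ) :
    minEigenvalue₂ a d (b ^ 2) * (s ^ 2 + t ^ 2) ≤ a * s ^ 2 + d * t ^ 2 - b * s * t := by
  unfold minEigenvalue₂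
  set S := √(b ^ 2 + (a - d) ^ 2)
  have hS : 0 ≤ S := Real.sqrt_nonneg _
  have hS2 : S ^ 2 = b ^ 2 + (a - d) ^ 2 := Real.sq_sqrt (by positivity)
  rcases hS.eq_or_lt with h0 | hpos
  · have hb : b = 0 := by nlinarith [sq_nonneg b, sq_nonneg (a - d)]
    have had : a = d := by nlinarith [sq_nonneg b, sq_nonneg (a - d)]
    subst hb had
    rw [← h0]
    nlinarith
  · -- with `τ` the eigenvalue, `A = a - τ` and `D = d - τ` one has `A + D = S`, `4AD = b²`, and
    -- `(A + D)(As² + Dt² - bst) = (As - bt/2)² + (Dt - bs/2)²`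
    have hsos : S * (a * s ^ 2 + d * t ^ 2 - b * s * t -
        (1/2 * a + 1/2 * d - 1/2 * S) * (s ^ 2 + t ^ 2)) =
        ((a - d + S) / 2 * s - b * t / 2) ^ 2 + ((d - a + S) / 2 * t - b * s / 2) ^ 2 := by
      linear_combination (s ^ 2 / 4 + t ^ 2 / 4) * hS2
    nlinarith [sq_nonneg ((a - d + S) / 2 * s - b * t / 2),
      sq_nonneg ((d - a + S) / 2 * t - b * s / 2)]

theorem minEigenvalue₂_pos {a d c : ℝ} (hc : 0 ≤ c) (hd : 0 < d) (h : c < 4 * a * d) :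
    0 < minEigenvalue₂ a d c := by
  have ha : 0 < a := by nlinarith
  have : √(c + (a - d) ^ 2) < a + d := (Real.sqrt_lt' (by positivity)).2 (by nlinarith)
  unfold minEigenvalue₂
  linarith

theorem minEigenvalue₂_inv_inv_pos {γ₁ γ₂ θ n : ℝ} (hγ₂ : 0 < γ₂)
    (hcond : 0 < γ₁⁻¹ - γ₂ / 4 * θ ^ 2 * n ^ 2) :
    0 < minEigenvalue₂ γ₁⁻¹ γ₂⁻¹ (θ ^ 2 * n ^ 2) := by
  refine minEigenvalue₂_pos (by positivity) (inv_pos.2 hγ₂) ?_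
  have := mul_lt_mul_of_pos_left hcond (by positivity : (0 : ℝ) < 4 * γ₂⁻¹)
  field_simp at this ⊢
  linarith

theorem mul_inner_le_sq_norm_of_mul_sq_norm_le {E : Type*} [NormedAddCommGroup E]
    [InnerProductSpace ℝ E] {τ : ℝ} {u w : E} (hτ : 0 < τ) (h : τ * ‖w‖ ^ 2 ≤ ⟪u, w⟫_ℝ) :
    τ * ⟪u, w⟫_ℝ ≤ ‖u‖ ^ 2 := by
  have hcs := real_inner_le_norm u w
  have hw : τ * ‖w‖ ≤ ‖u‖ := by
    rcases (norm_nonneg w).eq_or_lt with h0 | hpos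
    · rw [← h0, mul_zero]
      exact norm_nonneg u
    · nlinarith
  nlinarith [norm_nonneg u, norm_nonneg w]

theorem mul_inner_add_inner_le_of_mul_sq_norm_add_le {E F : Type*} [NormedAddCommGroup E]
    [InnerProductSpace ℝ E] [NormedAddCommGroup F] [InnerProductSpace ℝ F] {τ : ℝ}
    {u₁ w₁ : E} {u₂ w₂ : F} (hτ : 0 < τ)
    (h : τ * (‖w₁‖ ^ 2 + ‖w₂‖ ^ 2) ≤ ⟪u₁, w₁⟫_ℝ + ⟪u₂, w₂⟫_ℝ) :
    τ * (⟪u₁, w₁⟫_ℝ + ⟪u₂, w₂⟫_ℝ) ≤ ‖u₁‖ ^ 2 + ‖u₂‖ ^ 2 := by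
  have hL2 := mul_inner_le_sq_norm_of_mul_sq_norm_le
    (u := WithLp.toLp 2 (u₁, u₂)) (w := WithLp.toLp 2 (w₁, w₂)) hτ
  simp only [WithLp.prod_inner_apply, WithLp.prod_norm_sq_eq_of_L2] at hL2
  exact hL2 h

section Gradient

variable {E : Type*} [NormedAddCommGroup E] [InnerProductSpace ℝ E] [CompleteSpace E]
  {f : E → ℝ} {f' : E → E} {β : ℝ}

theorem HasGradientAt.hasDerivAt_comp_line {g x d : E} {t : ℝ}
    (hf : HasGradientAt f g (x + t • d)) :
    HasDerivAt (fun s : ℝ => f (x + s • d)) ⟪g, d⟫_ℝ t := by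
  have hline : HasDerivAt (fun s : ℝ => x + s • d) d t := by
    simpa using ((hasDerivAt_id t).smul_const d).const_add x
  simpa [Function.comp_def] using
    (hasGradientAt_iff_hasFDerivAt.mp hf).comp_hasDerivAt t hline

theorem ConvexOn.add_inner_sub_le {g x : E} (hconv : ConvexOn ℝ Set.univ f)
    (hf : HasGradientAt f g x) (y : E) : f x + ⟪g, y - x⟫_ℝ ≤ f y := by
  have hline : ConvexOn ℝ Set.univ (fun t : ℝ => f (x + t • (y - x))) := by
    simpa [Function.comp_def, AffineMap.lineMap_apply_module', add_comm] using
      hconv.comp_affineMap (AffineMap.lineMap x y : ℝ →ᵃ[ℝ] E)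
  have hslope := hline.le_slope_of_hasDerivAt (Set.mem_univ 0) (Set.mem_univ 1) one_pos
    (HasGradientAt.hasDerivAt_comp_line (by simpa using hf))
  simp only [slope_def_field, zero_smul, add_zero, one_smul, add_sub_cancel] at hslope
  linarith

/-- The descent lemma. -/
theorem le_add_inner_sub_add_sq_norm (hgrad : ∀ x, HasGradientAt f (f' x) x)
    (hlip : ∀ a b, ‖f' a - f' b‖ ≤ β * ‖a - b‖) (x y : E) :
    f y ≤ f x + ⟪f' x, y - x⟫_ℝ + β / 2 * ‖y - x‖ ^ 2 := by
  set d := y - x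
  set φ : ℝ → ℝ := fun t => f (x + t • d) - t * ⟪f' x, d⟫_ℝ - β / 2 * ‖d‖ ^ 2 * t ^ 2
  have hφ' : ∀ t : ℝ, HasDerivAt φ
      (⟪f' (x + t • d), d⟫_ℝ - 1 * ⟪f' x, d⟫_ℝ - β / 2 * ‖d‖ ^ 2 * (↑2 * t ^ (2 - 1))) t :=
    fun t => (((hgrad _).hasDerivAt_comp_line).sub ((hasDerivAt_id t).mul_const _)).sub
      ((hasDerivAt_pow 2 t).const_mul _)
  have hanti : AntitoneOn φ (Set.Icc 0 1) := by
    refine antitoneOn_of_hasDerivWithinAt_nonpos (convex_Icc 0 1)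
      (fun t _ => (hφ' t).continuousAt.continuousWithinAt)
      (fun t _ => (hφ' t).hasDerivWithinAt) fun t ht => ?_
    rw [interior_Icc] at ht
    have hstep : ‖f' (x + t • d) - f' x‖ ≤ β * (t * ‖d‖) := by
      simpa [norm_smul, abs_of_pos ht.1] using hlip (x + t • d) x
    have hcs := real_inner_le_norm (f' (x + t • d) - f' x) d
    rw [inner_sub_left] at hcs
    nlinarith [norm_nonneg d]
  have h01 := hanti (Set.left_mem_Icc.2 zero_le_one) (Set.right_mem_Icc.2 zero_le_one) zero_le_one
  simp only [φ, d, zero_smul, add_zero, one_smul, add_sub_cancel] at h01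
  linarith

theorem ConvexOn.add_inner_sub_add_sq_norm_le (hβ : 0 < β) (hconv : ConvexOn ℝ Set.univ f)
    (hgrad : ∀ x, HasGradientAt f (f' x) x) (hlip : ∀ a b, ‖f' a - f' b‖ ≤ β * ‖a - b‖)
    (x y : E) : f x + ⟪f' x, y - x⟫_ℝ + (2 * β)⁻¹ * ‖f' y - f' x‖ ^ 2 ≤ f y := by
  -- compare both sides with `f` at the gradient step `w` from `y`
  set w := y - β⁻¹ • (f' y - f' x)
  have hbelow := hconv.add_inner_sub_le (hgrad x) w
  have habove := le_add_inner_sub_add_sq_norm hgrad hlip y w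
  have hwy : w - y = -(β⁻¹ • (f' y - f' x)) := by simp [w]
  have hwx : w - x = (y - x) + (w - y) := by abel
  rw [hwx, inner_add_right] at hbelow
  have hnorm : ‖w - y‖ = β⁻¹ * ‖f' y - f' x‖ := by
    rw [hwy, norm_neg, norm_smul, Real.norm_eq_abs, abs_of_pos (inv_pos.2 hβ)]
  rw [hnorm] at habove
  have hinner : ⟪f' y - f' x, w - y⟫_ℝ = -(β⁻¹ * ‖f' y - f' x‖ ^ 2) := by
    rw [hwy, inner_neg_right, real_inner_smul_right, real_inner_self_eq_norm_sq]
  rw [inner_sub_left] at hinner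
  have hcoef : β / 2 * (β⁻¹ * ‖f' y - f' x‖) ^ 2 - β⁻¹ * ‖f' y - f' x‖ ^ 2 =
      -((2 * β)⁻¹ * ‖f' y - f' x‖ ^ 2) := by
    field_simp; ring
  linarith

/-- The Baillon–Haddad theorem. -/
theorem ConvexOn.inv_mul_sq_norm_sub_le_inner (hβ : 0 < β) (hconv : ConvexOn ℝ Set.univ f)
    (hgrad : ∀ x, HasGradientAt f (f' x) x) (hlip : ∀ a b, ‖f' a - f' b‖ ≤ β * ‖a - b‖)
    (x y : E) : β⁻¹ * ‖f' x - f' y‖ ^ 2 ≤ ⟪f' x - f' y, x - y⟫_ℝ := by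
  have hxy := hconv.add_inner_sub_add_sq_norm_le hβ hgrad hlip x y
  have hyx := hconv.add_inner_sub_add_sq_norm_le hβ hgrad hlip y x
  rw [norm_sub_rev] at hxy
  have hinner : ⟪f' x - f' y, x - y⟫_ℝ = -⟪f' x, y - x⟫_ℝ - ⟪f' y, x - y⟫_ℝ := by
    rw [inner_sub_left, ← inner_neg_right, neg_sub]
  have hcoef : β⁻¹ = (2 * β)⁻¹ + (2 * β)⁻¹ := by ring
  rw [hcoef, add_mul]
  linarith

end Gradient

section Preconditioner

variable {H G : Type*} [NormedAddCommGroup H] [InnerProductSpace ℝ H] [CompleteSpace H]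
  [NormedAddCommGroup G] [InnerProductSpace ℝ G] [CompleteSpace G] (L : H →L[ℝ] G)

theorem minEigenvalue₂_mul_le_inner_preconditioner (a d θ : ℝ) (x : H) (y : G) :
    minEigenvalue₂ a d (θ ^ 2 * ‖L‖ ^ 2) * (‖x‖ ^ 2 + ‖y‖ ^ 2) ≤
      ⟪x, a • x - (θ / 2) • L.adjoint y⟫_ℝ + ⟪y, -((θ / 2) • L x) + d • y⟫_ℝ := by
  have hexpand : ⟪x, a • x - (θ / 2) • L.adjoint y⟫_ℝ + ⟪y, -((θ / 2) • L x) + d • y⟫_ℝ =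
      a * ‖x‖ ^ 2 + d * ‖y‖ ^ 2 - θ * ⟪L x, y⟫_ℝ := by
    simp only [inner_sub_right, inner_add_right, inner_neg_right, real_inner_smul_right,
      real_inner_self_eq_norm_sq, ContinuousLinearMap.adjoint_inner_right, real_inner_comm (L x)]
    ring
  have hcross : θ * ⟪L x, y⟫_ℝ ≤ |θ| * ‖L‖ * ‖x‖ * ‖y‖ := by
    calc θ * ⟪L x, y⟫_ℝ ≤ |θ| * |⟪L x, y⟫_ℝ| := by rw [← abs_mul]; exact le_abs_self _
      _ ≤ |θ| * (‖L x‖ * ‖y‖) := by gcongr; exact abs_real_inner_le_norm _ _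
      _ ≤ |θ| * ‖L‖ * ‖x‖ * ‖y‖ := by
          rw [mul_assoc _ ‖L‖, mul_assoc]; gcongr; exact L.le_opNorm x
  have hquad := minEigenvalue₂_mul_sq_add_sq_le a d (|θ| * ‖L‖) ‖x‖ ‖y‖
  rw [mul_pow, sq_abs] at hquad
  linarith

theorem mul_sq_norm_le_inner_preconditioner_of_snd_eq_zero {a γ θ : ℝ} (hγ : 0 < γ) {x : H} {y : G}
    (hy : -((θ / 2) • L x) + γ⁻¹ • y = 0) :
    (a - γ / 4 * θ ^ 2 * ‖L‖ ^ 2) * ‖x‖ ^ 2 ≤ ⟪a • x - (θ / 2) • L.adjoint y, x⟫_ℝ := by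
  have hy' : y = (γ * (θ / 2)) • L x := by
    rw [neg_add_eq_zero] at hy
    rw [mul_smul, hy, smul_inv_smul₀ hγ.ne']
  have hexpand : ⟪a • x - (θ / 2) • L.adjoint y, x⟫_ℝ = a * ‖x‖ ^ 2 - γ / 4 * θ ^ 2 * ‖L x‖ ^ 2 := by
    rw [inner_sub_left, real_inner_smul_left, real_inner_smul_left, real_inner_self_eq_norm_sq,
      ContinuousLinearMap.adjoint_inner_left, hy', real_inner_smul_left, real_inner_self_eq_norm_sq]
    ring
  have hLx : ‖L x‖ ^ 2 ≤ ‖L‖ ^ 2 * ‖x‖ ^ 2 := by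
    rw [← mul_pow]; exact pow_le_pow_left₀ (norm_nonneg _) (L.le_opNorm x) 2
  rw [hexpand]
  nlinarith [mul_le_mul_of_nonneg_left hLx (by positivity : 0 ≤ γ / 4 * θ ^ 2)]

end Preconditioner

theorem smooth_part_cocoercive_general
    {H G : Type*} [NormedAddCommGroup H] [InnerProductSpace ℝ H] [CompleteSpace H]
    [NormedAddCommGroup G] [InnerProductSpace ℝ G] [CompleteSpace G]
    (L : H →L[ℝ] G) (γ₁ γ₂ θ : ℝ) (hγ₂ : 0 < γ₂)
    (hcond : 0 < γ₁⁻¹ - γ₂ / 4 * θ ^ 2 * ‖L‖ ^ 2)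
    (τ : ℝ)
    (hτdef : τ = 1/2 * γ₁⁻¹ + 1/2 * γ₂⁻¹ -
      1/2 * Real.sqrt (θ ^ 2 * ‖L‖ ^ 2 + (γ₁⁻¹ - γ₂⁻¹) ^ 2))
    (Pf Pinv : H × G → H × G)
    (hPf : ∀ w : H × G,
      Pf w = (γ₁⁻¹ • w.1 - (θ/2) • (ContinuousLinearMap.adjoint L) w.2,
        -((θ/2) • L w.1) + γ₂⁻¹ • w.2))
    (hPinv : ∀ w : H × G, Pf (Pinv w) = w ∧ Pinv (Pf w) = w)
    (h : H → ℝ) (h' : H → H) (βh : ℝ) (hβh : 0 < βh)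
    (hconv : ConvexOn ℝ Set.univ h)
    (hgrad : ∀ x, HasGradientAt h (h' x) x)
    (hlip : ∀ x x', ‖h' x - h' x'‖ ≤ βh * ‖x - x'‖)
    (lstar : G → ℝ) (l' : G → G) (βl : ℝ) (hβl : 0 < βl)
    (hconvl : ConvexOn ℝ Set.univ lstar)
    (hgradl : ∀ y, HasGradientAt lstar (l' y) y)
    (hlipl : ∀ y y', ‖l' y - l' y'‖ ≤ βl * ‖y - y'‖)
    (Cf : H × G → H × G) (hCf : ∀ w : H × G, Cf w = (h' w.1, l' w.2)) :
    (∀ z z' : H × G,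
      (τ * min βl⁻¹ βh⁻¹) *
        (⟪(Cf z - Cf z').1, (Pinv (Cf z - Cf z')).1⟫_ℝ +
         ⟪(Cf z - Cf z').2, (Pinv (Cf z - Cf z')).2⟫_ℝ) ≤
      ⟪(Cf z - Cf z').1, (z - z').1⟫_ℝ + ⟪(Cf z - Cf z').2, (z - z').2⟫_ℝ) ∧
    ((∀ y, l' y = 0) → ∀ z z' : H × G,
      (βh⁻¹ * (γ₁⁻¹ - γ₂ / 4 * θ ^ 2 * ‖L‖ ^ 2)) *
        (⟪(Cf z - Cf z').1, (Pinv (Cf z - Cf z')).1⟫_ℝ +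
         ⟪(Cf z - Cf z').2, (Pinv (Cf z - Cf z')).2⟫_ℝ) ≤
      ⟪(Cf z - Cf z').1, (z - z').1⟫_ℝ + ⟪(Cf z - Cf z').2, (z - z').2⟫_ℝ) := by
  have hCf_sub : ∀ z z', Cf z - Cf z' = (h' z.1 - h' z'.1, l' z.2 - l' z'.2) := by
    simp [hCf]
  have hτ_eq : minEigenvalue₂ γ₁⁻¹ γ₂⁻¹ (θ ^ 2 * ‖L‖ ^ 2) = τ := hτdef.symm
  have hh := hconv.inv_mul_sq_norm_sub_le_inner hβh hgrad hlip
  refine ⟨fun z z' => ?_, fun hl0 z z' => ?_⟩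
  · have hτ : 0 < τ := hτ_eq ▸ minEigenvalue₂_inv_inv_pos hγ₂ hcond
    rw [hCf_sub]; dsimp only
    set w := Pinv (h' z.1 - h' z'.1, l' z.2 - l' z'.2)
    obtain ⟨hPw₁, hPw₂⟩ := Prod.mk_inj.mp ((hPf w).symm.trans (hPinv _).1)
    have hpos := minEigenvalue₂_mul_le_inner_preconditioner L γ₁⁻¹ γ₂⁻¹ θ w.1 w.2
    rw [hτ_eq, hPw₁, hPw₂, real_inner_comm _ w.1, real_inner_comm _ w.2] at hpos
    have hdual := mul_inner_add_inner_le_of_mul_sq_norm_add_le hτ hpos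
    have hl := hconvl.inv_mul_sq_norm_sub_le_inner hβl hgradl hlipl z.2 z'.2
    calc _ = min βl⁻¹ βh⁻¹ * (τ * (⟪h' z.1 - h' z'.1, w.1⟫_ℝ + ⟪l' z.2 - l' z'.2, w.2⟫_ℝ)) := by
          ring
      _ ≤ min βl⁻¹ βh⁻¹ * (‖h' z.1 - h' z'.1‖ ^ 2 + ‖l' z.2 - l' z'.2‖ ^ 2) := by gcongr
      _ ≤ βh⁻¹ * ‖h' z.1 - h' z'.1‖ ^ 2 + βl⁻¹ * ‖l' z.2 - l' z'.2‖ ^ 2 := by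
          rw [mul_add]; gcongr; exacts [min_le_right _ _, min_le_left _ _]
      _ ≤ _ := add_le_add (hh z.1 z'.1) hl
  · rw [hCf_sub, hl0, hl0, sub_zero]; dsimp only
    set w := Pinv (h' z.1 - h' z'.1, 0)
    obtain ⟨hPw₁, hPw₂⟩ := Prod.mk_inj.mp ((hPf w).symm.trans (hPinv _).1)
    have hpos := mul_sq_norm_le_inner_preconditioner_of_snd_eq_zero L (a := γ₁⁻¹) hγ₂ hPw₂
    rw [hPw₁] at hpos
    have hdual := mul_inner_le_sq_norm_of_mul_sq_norm_le hcond hpos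
    simp only [inner_zero_left, add_zero]
    calc _ = βh⁻¹ * ((γ₁⁻¹ - γ₂ / 4 * θ ^ 2 * ‖L‖ ^ 2) * ⟪h' z.1 - h' z'.1, w.1⟫_ℝ) := by ring
      _ ≤ βh⁻¹ * ‖h' z.1 - h' z'.1‖ ^ 2 := by gcongr
      _ ≤ _ := hh z.1 z'.1

/-- Lemma 5.3: cocoercivity of the smooth part `C(x,y) = (∇h(x), ∇l⋆(y))` with respect to
the `P`-norm, where `P(x,y) = (γ₁⁻¹x − (θ/2)L*y, −(θ/2)Lx + γ₂⁻¹y)` (given together with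
its inverse `Pinv`), the inner product on `K = H × G` is
`⟨(x,y),(x',y')⟩ = ⟨x,x'⟩ + ⟨y,y'⟩`, and `‖w‖²_{P⁻¹} = ⟨w, P⁻¹w⟩`. -/
theorem smooth_part_cocoercive
    {H G : Type*} [NormedAddCommGroup H] [InnerProductSpace ℝ H] [CompleteSpace H]
    [NormedAddCommGroup G] [InnerProductSpace ℝ G] [CompleteSpace G]
    (L : H →L[ℝ] G) (γ₁ γ₂ θ : ℝ) (hγ₁ : 0 < γ₁) (hγ₂ : 0 < γ₂) (hθ : 0 ≤ θ)
    (hcond : 0 < γ₁⁻¹ - γ₂ / 4 * θ ^ 2 * ‖L‖ ^ 2)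
    (τ : ℝ)
    (hτdef : τ = 1/2 * γ₁⁻¹ + 1/2 * γ₂⁻¹ -
      1/2 * Real.sqrt (θ ^ 2 * ‖L‖ ^ 2 + (γ₁⁻¹ - γ₂⁻¹) ^ 2))
    (Pf Pinv : H × G → H × G)
    (hPf : ∀ w : H × G,
      Pf w = (γ₁⁻¹ • w.1 - (θ/2) • (ContinuousLinearMap.adjoint L) w.2,
        -((θ/2) • L w.1) + γ₂⁻¹ • w.2))
    (hPinv : ∀ w : H × G, Pf (Pinv w) = w ∧ Pinv (Pf w) = w)
    (h : H → ℝ) (h' : H → H) (βh : ℝ) (hβh : 0 < βh)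
    (hconv : ConvexOn ℝ Set.univ h)
    (hgrad : ∀ x, HasGradientAt h (h' x) x)
    (hlip : ∀ x x', ‖h' x - h' x'‖ ≤ βh * ‖x - x'‖)
    (lstar : G → ℝ) (l' : G → G) (βl : ℝ) (hβl : 0 < βl)
    (hconvl : ConvexOn ℝ Set.univ lstar)
    (hgradl : ∀ y, HasGradientAt lstar (l' y) y)
    (hlipl : ∀ y y', ‖l' y - l' y'‖ ≤ βl * ‖y - y'‖)
    (Cf : H × G → H × G) (hCf : ∀ w : H × G, Cf w = (h' w.1, l' w.2)) :
    (∀ z z' : H × G,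
      (τ * min βl⁻¹ βh⁻¹) *
        (⟪(Cf z - Cf z').1, (Pinv (Cf z - Cf z')).1⟫_ℝ +
         ⟪(Cf z - Cf z').2, (Pinv (Cf z - Cf z')).2⟫_ℝ) ≤
      ⟪(Cf z - Cf z').1, (z - z').1⟫_ℝ + ⟪(Cf z - Cf z').2, (z - z').2⟫_ℝ) ∧
    ((∀ y, l' y = 0) → ∀ z z' : H × G,
      (βh⁻¹ * (γ₁⁻¹ - γ₂ / 4 * θ ^ 2 * ‖L‖ ^ 2)) *
        (⟪(Cf z - Cf z').1, (Pinv (Cf z - Cf z')).1⟫_ℝ +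
         ⟪(Cf z - Cf z').2, (Pinv (Cf z - Cf z')).2⟫_ℝ) ≤
      ⟪(Cf z - Cf z').1, (z - z').1⟫_ℝ + ⟪(Cf z - Cf z').2, (z - z').2⟫_ℝ) :=
  smooth_part_cocoercive_general L γ₁ γ₂ θ hγ₂ hcond τ hτdef Pf Pinv hPf hPinv h h' βh hβh hconv
    hgrad hlip lstar l' βl hβl hconvl hgradl hlipl Cf hCf
end

section
/- (Lemma 5.5, strong positivity of S₁, S₂ and S). Let H, G be real Hilbert spaces, K = H × G, L : H → G bounded linear, γ₁, γ₂ > 0, θ ≥ 0 with γ₁⁻¹ − (γ₂/4)θ²‖L‖² > 0. Define S₁, S₂ : K → K by S₁(x, y) = (γ₁⁻¹x + (1−θ)L*y, (1−θ)Lx + γ₂⁻¹y + γ₁(1−θ)(2−θ)LL*y) and S₂(x, y) = (γ₁⁻¹x + γ₂(2−θ)L*Lx − L*y, −Lx + γ₂⁻¹y). Then S₁ and S₂ are strongly positive: there exists c > 0 with ⟨z, S₁ z⟩ ≥ c‖z‖² and ⟨z, S₂ z⟩ ≥ c‖z‖² for all z ∈ K. Consequently, for every μ ∈ [0, 1] the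 operator S = (μ S₁⁻¹ + (1 − μ) S₂⁻¹)⁻¹ is a well-defined strongly positive self-adjoint bounded linear operator on K. -/
/-!
Completing the square, with `z = (x, y)`,
`⟪S₁ z, z⟫ = γ₁⁻¹ ‖x + γ₁ (1 - θ) L† y‖² + γ₂⁻¹ ‖y‖² + γ₁ (1 - θ) ‖L† y‖²` and
`⟪S₂ z, z⟫ = γ₂⁻¹ ‖y - γ₂ L x‖² + γ₁⁻¹ ‖x‖² + γ₂ (1 - θ) ‖L x‖²`.
Since `1 - θ ≥ -θ² / 4`, the last term costs at most `γ θ² ‖L‖² / 4` times `‖y‖²`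
(resp. `‖x‖²`), and the hypothesis on `γ₁, γ₂, θ` leaves a positive multiple of `‖y‖²`
(resp. `‖x‖²`); together with the square this bounds `‖x‖² + ‖y‖²`.
By Lax–Milgram a strongly positive operator is invertible with strongly positive inverse, and
convex combinations of strongly positive operators are strongly positive; this gives `S`.
-/

open scoped InnerProductSpace Ring
open ContinuousLinearMap

section StronglyPositive

variable {E : Type*} [NormedAddCommGroup E] [InnerProductSpace ℝ E] [CompleteSpace E]

def IsStronglyPositive (A : E →L[ℝ] E) : Prop :=
  IsSelfAdjoint A ∧ ∃ c > 0, ∀ z, c * ‖z‖ ^ 2 ≤ ⟪A z, z⟫_ℝ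

namespace IsStronglyPositive

variable {A B : E →L[ℝ] E}

theorem isUnit (hA : IsStronglyPositive A) : IsUnit A := by
  obtain ⟨c, hc, hcA⟩ := hA.2
  have hB : IsCoercive ((innerSL ℝ).comp A) :=
    ⟨c, hc, fun u => by simpa [pow_two, mul_assoc] using hcA u⟩
  have hBA : (hB.continuousLinearEquivOfBilin : E →L[ℝ] E) = A := by
    ext v
    refine ext_inner_right ℝ fun w => ?_
    simp
  rw [← hBA]
  exact ⟨(ContinuousLinearEquiv.unitsEquiv ℝ E).symm hB.continuousLinearEquivOfBilin, rfl⟩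

theorem ringInverse (hA : IsStronglyPositive A) : IsStronglyPositive A⁻¹ʳ := by
  obtain ⟨c, hc, hcA⟩ := hA.2
  refine ⟨hA.1.ringInverse, c / (‖A‖ ^ 2 + 1), by positivity, fun z => ?_⟩
  set u := A⁻¹ʳ z
  have hAu : A u = z := congrArg (fun T => T z) (Ring.mul_inverse_cancel A hA.isUnit)
  have hz : ‖z‖ ^ 2 ≤ ‖A‖ ^ 2 * ‖u‖ ^ 2 := by
    rw [← mul_pow, ← hAu]
    exact pow_le_pow_left₀ (norm_nonneg _) (A.le_opNorm u) 2
  have hc' : c / (‖A‖ ^ 2 + 1) * ‖A‖ ^ 2 ≤ c := by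
    rw [div_mul_eq_mul_div, div_le_iff₀ (by positivity)]
    nlinarith
  calc c / (‖A‖ ^ 2 + 1) * ‖z‖ ^ 2 ≤ c / (‖A‖ ^ 2 + 1) * (‖A‖ ^ 2 * ‖u‖ ^ 2) := by gcongr
    _ ≤ c * ‖u‖ ^ 2 := by rw [← mul_assoc]; gcongr
    _ ≤ ⟪A u, u⟫_ℝ := hcA u
    _ = ⟪u, z⟫_ℝ := by rw [hAu, real_inner_comm]

theorem exists_common_bound (hA : IsStronglyPositive A) (hB : IsStronglyPositive B) :
    ∃ c > 0, ∀ z, c * ‖z‖ ^ 2 ≤ ⟪A z, z⟫_ℝ ∧ c * ‖z‖ ^ 2 ≤ ⟪B z, z⟫_ℝ := by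
  obtain ⟨a, ha, haA⟩ := hA.2
  obtain ⟨b, hb, hbB⟩ := hB.2
  refine ⟨min a b, lt_min ha hb, fun z => ⟨?_, ?_⟩⟩
  · exact (mul_le_mul_of_nonneg_right (min_le_left a b) (sq_nonneg _)).trans (haA z)
  · exact (mul_le_mul_of_nonneg_right (min_le_right a b) (sq_nonneg _)).trans (hbB z)

theorem convexComb (hA : IsStronglyPositive A) (hB : IsStronglyPositive B) {μ : ℝ}
    (hμ : μ ∈ Set.Icc (0 : ℝ) 1) : IsStronglyPositive (μ • A + (1 - μ) • B) := by
  obtain ⟨c, hc, hcAB⟩ := hA.exists_common_bound hB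
  refine ⟨((IsSelfAdjoint.all μ).smul hA.1).add ((IsSelfAdjoint.all _).smul hB.1), c, hc,
    fun z => ?_⟩
  obtain ⟨hcA, hcB⟩ := hcAB z
  simp only [add_apply, smul_apply, inner_add_left, real_inner_smul_left]
  nlinarith [hμ.1, hμ.2]

end IsStronglyPositive

end StronglyPositive

theorem exists_coercive_of_sq_norm_add {E F : Type*} [NormedAddCommGroup E] [NormedSpace ℝ E]
    [NormedAddCommGroup F] [NormedSpace ℝ F] (A : F →L[ℝ] E) (s : ℝ) {α δ ρ r : ℝ}
    (hα : 0 < α) (hρ : ρ ≤ 0) (hρr : ρ ≤ r) (hδ : 0 < δ + ρ * ‖A‖ ^ 2) :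
    ∃ c > 0, ∀ x y, c * (‖x‖ ^ 2 + ‖y‖ ^ 2) ≤
      α * ‖x + s • A y‖ ^ 2 + δ * ‖y‖ ^ 2 + r * ‖A y‖ ^ 2 := by
  set β := δ + ρ * ‖A‖ ^ 2
  set C := |s| * ‖A‖
  set c := min (α / 2) (β / (2 * C ^ 2 + 1))
  have hc : 0 < c := lt_min (by positivity) (by positivity)
  have h₁ : c * 2 ≤ α := by linarith [min_le_left (α / 2) (β / (2 * C ^ 2 + 1))]
  have h₂ : c * (2 * C ^ 2 + 1) ≤ β := by
    rw [← le_div_iff₀ (by positivity)]; exact min_le_right _ _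
  refine ⟨c, hc, fun x y => ?_⟩
  set w := x + s • A y
  have hx : ‖x‖ ≤ ‖w‖ + C * ‖y‖ := calc
    ‖x‖ = ‖w - s • A y‖ := by rw [add_sub_cancel_right]
    _ ≤ ‖w‖ + |s| * ‖A y‖ := by rw [← Real.norm_eq_abs, ← norm_smul]; exact norm_sub_le _ _
    _ ≤ ‖w‖ + C * ‖y‖ := by rw [mul_assoc]; gcongr; exact A.le_opNorm y
  have hx2 : ‖x‖ ^ 2 ≤ 2 * ‖w‖ ^ 2 + 2 * C ^ 2 * ‖y‖ ^ 2 := by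
    nlinarith [norm_nonneg x, sq_nonneg (‖w‖ - C * ‖y‖)]
  have hr : ρ * ‖A‖ ^ 2 * ‖y‖ ^ 2 ≤ r * ‖A y‖ ^ 2 := calc
    ρ * ‖A‖ ^ 2 * ‖y‖ ^ 2 = ρ * (‖A‖ * ‖y‖) ^ 2 := by ring
    _ ≤ ρ * ‖A y‖ ^ 2 := mul_le_mul_of_nonpos_left (by gcongr; exact A.le_opNorm y) hρ
    _ ≤ r * ‖A y‖ ^ 2 := by gcongr
  calc c * (‖x‖ ^ 2 + ‖y‖ ^ 2) ≤ c * 2 * ‖w‖ ^ 2 + c * (2 * C ^ 2 + 1) * ‖y‖ ^ 2 := by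
        nlinarith [mul_le_mul_of_nonneg_left hx2 hc.le]
    _ ≤ α * ‖w‖ ^ 2 + β * ‖y‖ ^ 2 := by gcongr
    _ ≤ α * ‖w‖ ^ 2 + δ * ‖y‖ ^ 2 + r * ‖A y‖ ^ 2 := by linarith

noncomputable section Block

variable {H G : Type*} [NormedAddCommGroup H] [InnerProductSpace ℝ H]
  [NormedAddCommGroup G] [InnerProductSpace ℝ G]

/-- `H × G` carries the sup norm; the Hilbert space `K` of the paper is `WithLp 2 (H × G)`. -/
abbrev prodL2Conj :
    (WithLp 2 (H × G) →L[ℝ] WithLp 2 (H × G)) ≃A[ℝ] (H × G →L[ℝ] H × G) :=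
  (WithLp.prodContinuousLinearEquiv 2 ℝ H G).conjContinuousAlgEquiv

def blockOp (a : H →L[ℝ] H) (b : G →L[ℝ] H) (c : H →L[ℝ] G) (d : G →L[ℝ] G) :
    WithLp 2 (H × G) →L[ℝ] WithLp 2 (H × G) :=
  prodL2Conj.symm ((a.coprod b).prod (c.coprod d))

variable (a : H →L[ℝ] H) (b : G →L[ℝ] H) (c : H →L[ℝ] G) (d : G →L[ℝ] G)

theorem prodL2Conj_blockOp_apply (z : H × G) :
    prodL2Conj (blockOp a b c d) z = (a z.1 + b z.2, c z.1 + d z.2) := by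
  simp [blockOp]

theorem blockOp_apply (v : WithLp 2 (H × G)) :
    blockOp a b c d v = WithLp.toLp 2 (a v.ofLp.1 + b v.ofLp.2, c v.ofLp.1 + d v.ofLp.2) := rfl

theorem inner_blockOp_self (v : WithLp 2 (H × G)) :
    ⟪blockOp a b c d v, v⟫_ℝ = ⟪a v.ofLp.1, v.ofLp.1⟫_ℝ + ⟪b v.ofLp.2, v.ofLp.1⟫_ℝ +
      ⟪c v.ofLp.1, v.ofLp.2⟫_ℝ + ⟪d v.ofLp.2, v.ofLp.2⟫_ℝ := by
  simp only [blockOp_apply, WithLp.prod_inner_apply, inner_add_left]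
  ring

variable [CompleteSpace H] [CompleteSpace G]

theorem adjoint_blockOp :
    adjoint (blockOp a b c d) = blockOp (adjoint a) (adjoint c) (adjoint b) (adjoint d) := by
  refine ((eq_adjoint_iff _ _).2 fun v w => ?_).symm
  simp only [blockOp_apply, WithLp.prod_inner_apply, inner_add_left,
    inner_add_right, adjoint_inner_left]
  ring

theorem isSelfAdjoint_blockOp (ha : IsSelfAdjoint a) (hd : IsSelfAdjoint d)
    (hcb : c = adjoint b) : IsSelfAdjoint (blockOp a b c d) := by
  rw [isSelfAdjoint_iff', adjoint_blockOp, hcb, adjoint_adjoint, ha.adjoint_eq, hd.adjoint_eq]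

end Block

noncomputable section Operators

variable {H G : Type*} [NormedAddCommGroup H] [InnerProductSpace ℝ H] [CompleteSpace H]
  [NormedAddCommGroup G] [InnerProductSpace ℝ G] [CompleteSpace G]
  (L : H →L[ℝ] G) (γ₁ γ₂ θ : ℝ)

def opS₁ : WithLp 2 (H × G) →L[ℝ] WithLp 2 (H × G) :=
  blockOp (γ₁⁻¹ • 1) ((1 - θ) • adjoint L) ((1 - θ) • L)
    (γ₂⁻¹ • 1 + (γ₁ * (1 - θ) * (2 - θ)) • (L ∘L adjoint L))

def opS₂ : WithLp 2 (H × G) →L[ℝ] WithLp 2 (H × G) :=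
  blockOp (γ₁⁻¹ • 1 + (γ₂ * (2 - θ)) • (adjoint L ∘L L)) (-adjoint L) (-L) (γ₂⁻¹ • 1)

theorem prodL2Conj_opS₁_apply (z : H × G) :
    prodL2Conj (opS₁ L γ₁ γ₂ θ) z =
      (γ₁⁻¹ • z.1 + (1 - θ) • adjoint L z.2,
        (1 - θ) • L z.1 + γ₂⁻¹ • z.2 + (γ₁ * (1 - θ) * (2 - θ)) • L (adjoint L z.2)) := by
  rw [opS₁, prodL2Conj_blockOp_apply]
  simp [add_assoc]

theorem prodL2Conj_opS₂_apply (z : H × G) :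
    prodL2Conj (opS₂ L γ₁ γ₂ θ) z =
      (γ₁⁻¹ • z.1 + (γ₂ * (2 - θ)) • adjoint L (L z.1) - adjoint L z.2, -L z.1 + γ₂⁻¹ • z.2) := by
  rw [opS₂, prodL2Conj_blockOp_apply]
  simp [sub_eq_add_neg]

theorem isSelfAdjoint_opS₁ : IsSelfAdjoint (opS₁ L γ₁ γ₂ θ) :=
  isSelfAdjoint_blockOp _ _ _ _ ((IsSelfAdjoint.all _).smul (.one _))
    (((IsSelfAdjoint.all _).smul (.one _)).add
      ((IsSelfAdjoint.all _).smul (isPositive_self_comp_adjoint L).isSelfAdjoint))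
    (by simp)

theorem isSelfAdjoint_opS₂ : IsSelfAdjoint (opS₂ L γ₁ γ₂ θ) :=
  isSelfAdjoint_blockOp _ _ _ _
    (((IsSelfAdjoint.all _).smul (.one _)).add
      ((IsSelfAdjoint.all _).smul (isPositive_adjoint_comp_self L).isSelfAdjoint))
    ((IsSelfAdjoint.all _).smul (.one _)) (by simp)

variable {γ₁ γ₂}

theorem inner_opS₁_self (hγ₁ : γ₁ ≠ 0) (v : WithLp 2 (H × G)) :
    ⟪opS₁ L γ₁ γ₂ θ v, v⟫_ℝ =
      γ₁⁻¹ * ‖v.ofLp.1 + (γ₁ * (1 - θ)) • adjoint L v.ofLp.2‖ ^ 2 + γ₂⁻¹ * ‖v.ofLp.2‖ ^ 2 +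
        γ₁ * (1 - θ) * ‖adjoint L v.ofLp.2‖ ^ 2 := by
  have hLL : ⟪L (adjoint L v.ofLp.2), v.ofLp.2⟫_ℝ = ‖adjoint L v.ofLp.2‖ ^ 2 := by
    rw [← adjoint_inner_right, real_inner_self_eq_norm_sq]
  have hL : ⟪L v.ofLp.1, v.ofLp.2⟫_ℝ = ⟪adjoint L v.ofLp.2, v.ofLp.1⟫_ℝ := by
    rw [adjoint_inner_left, real_inner_comm]
  rw [norm_add_sq_real, norm_smul, real_inner_smul_right, mul_pow, Real.norm_eq_abs, sq_abs,
    opS₁, inner_blockOp_self]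
  simp only [add_apply, smul_apply, one_apply_eq_self, comp_apply, inner_add_left,
    real_inner_smul_left, real_inner_smul_right, hLL, hL, real_inner_self_eq_norm_sq,
    real_inner_comm v.ofLp.1]
  field_simp
  ring

theorem inner_opS₂_self (hγ₂ : γ₂ ≠ 0) (v : WithLp 2 (H × G)) :
    ⟪opS₂ L γ₁ γ₂ θ v, v⟫_ℝ =
      γ₂⁻¹ * ‖v.ofLp.2 + (-γ₂) • L v.ofLp.1‖ ^ 2 + γ₁⁻¹ * ‖v.ofLp.1‖ ^ 2 +
        γ₂ * (1 - θ) * ‖L v.ofLp.1‖ ^ 2 := by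
  have hLL : ⟪adjoint L (L v.ofLp.1), v.ofLp.1⟫_ℝ = ‖L v.ofLp.1‖ ^ 2 := by
    rw [adjoint_inner_left, real_inner_self_eq_norm_sq]
  have hL : ⟪adjoint L v.ofLp.2, v.ofLp.1⟫_ℝ = ⟪L v.ofLp.1, v.ofLp.2⟫_ℝ := by
    rw [adjoint_inner_left, real_inner_comm]
  rw [norm_add_sq_real, norm_smul, real_inner_smul_right, mul_pow, Real.norm_eq_abs, sq_abs,
    opS₂, inner_blockOp_self]
  simp only [add_apply, smul_apply, one_apply_eq_self, comp_apply, neg_apply, inner_add_left,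
    inner_neg_left, inner_neg_right, real_inner_smul_left, real_inner_smul_right, hLL, hL,
    real_inner_self_eq_norm_sq, real_inner_comm v.ofLp.2]
  field_simp
  ring

variable {θ}

theorem isStronglyPositive_opS₁ (hγ₁ : 0 < γ₁) (hγ₂ : 0 < γ₂)
    (hcond : 0 < γ₁⁻¹ - γ₂ / 4 * θ ^ 2 * ‖L‖ ^ 2) : IsStronglyPositive (opS₁ L γ₁ γ₂ θ) := by
  have hδ : 0 < γ₂⁻¹ + -(γ₁ * θ ^ 2 / 4) * ‖adjoint L‖ ^ 2 := by
    have h : γ₂⁻¹ + -(γ₁ * θ ^ 2 / 4) * ‖L‖ ^ 2 =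
        γ₁ * γ₂⁻¹ * (γ₁⁻¹ - γ₂ / 4 * θ ^ 2 * ‖L‖ ^ 2) := by
      field_simp
      ring
    rw [LinearIsometryEquiv.norm_map, h]
    positivity
  obtain ⟨c, hc, hQ⟩ := exists_coercive_of_sq_norm_add (adjoint L) (γ₁ * (1 - θ))
    (r := γ₁ * (1 - θ)) (inv_pos.2 hγ₁) (neg_nonpos.2 (by positivity))
    (by nlinarith [sq_nonneg (θ - 2)]) hδ
  refine ⟨isSelfAdjoint_opS₁ L γ₁ γ₂ θ, c, hc, fun v => ?_⟩
  rw [inner_opS₁_self L θ hγ₁.ne', WithLp.prod_norm_sq_eq_of_L2]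
  exact hQ _ _

theorem isStronglyPositive_opS₂ (hγ₂ : 0 < γ₂)
    (hcond : 0 < γ₁⁻¹ - γ₂ / 4 * θ ^ 2 * ‖L‖ ^ 2) : IsStronglyPositive (opS₂ L γ₁ γ₂ θ) := by
  have hδ : 0 < γ₁⁻¹ + -(γ₂ * θ ^ 2 / 4) * ‖L‖ ^ 2 := by linarith
  obtain ⟨c, hc, hQ⟩ := exists_coercive_of_sq_norm_add L (-γ₂)
    (r := γ₂ * (1 - θ)) (inv_pos.2 hγ₂) (neg_nonpos.2 (by positivity))
    (by nlinarith [sq_nonneg (θ - 2)]) hδ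
  refine ⟨isSelfAdjoint_opS₂ L γ₁ γ₂ θ, c, hc, fun v => ?_⟩
  rw [inner_opS₂_self L θ hγ₂.ne', WithLp.prod_norm_sq_eq_of_L2, add_comm (‖_‖ ^ 2)]
  exact hQ _ _

end Operators

theorem norm_toLp_sq {E F : Type*} [SeminormedAddCommGroup E] [SeminormedAddCommGroup F]
    (z : E × F) : ‖WithLp.toLp 2 z‖ ^ 2 = ‖z.1‖ ^ 2 + ‖z.2‖ ^ 2 :=
  WithLp.prod_norm_sq_eq_of_L2 _

section Transport

variable {H G : Type*} [NormedAddCommGroup H] [InnerProductSpace ℝ H]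
  [NormedAddCommGroup G] [InnerProductSpace ℝ G]

theorem inner_prodL2Conj_self (X : WithLp 2 (H × G) →L[ℝ] WithLp 2 (H × G)) (z : H × G) :
    ⟪z.1, (prodL2Conj X z).1⟫_ℝ + ⟪z.2, (prodL2Conj X z).2⟫_ℝ =
      ⟪X (WithLp.toLp 2 z), WithLp.toLp 2 z⟫_ℝ := by
  rw [real_inner_comm _ z.1, real_inner_comm _ z.2]
  rfl

theorem norm_sq_prodL2Conj_apply_le (X : WithLp 2 (H × G) →L[ℝ] WithLp 2 (H × G)) (z : H × G) :
    ‖(prodL2Conj X z).1‖ ^ 2 + ‖(prodL2Conj X z).2‖ ^ 2 ≤ ‖X‖ ^ 2 * (‖z.1‖ ^ 2 + ‖z.2‖ ^ 2) := by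
  rw [← norm_toLp_sq, ← norm_toLp_sq, WithLp.toLp_ofLp, ← mul_pow]
  exact pow_le_pow_left₀ (norm_nonneg _) (X.le_opNorm _) 2

theorem prodL2Conj_mul_inverse_apply {X : WithLp 2 (H × G) →L[ℝ] WithLp 2 (H × G)}
    (hX : IsUnit X) (z : H × G) :
    prodL2Conj X (prodL2Conj X⁻¹ʳ z) = z ∧ prodL2Conj X⁻¹ʳ (prodL2Conj X z) = z :=
  ⟨show (prodL2Conj X * prodL2Conj X⁻¹ʳ) z = z by
      rw [← map_mul, Ring.mul_inverse_cancel X hX, map_one]; rfl,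
    show (prodL2Conj X⁻¹ʳ * prodL2Conj X) z = z by
      rw [← map_mul, Ring.inverse_mul_cancel X hX, map_one]; rfl⟩

variable [CompleteSpace H] [CompleteSpace G]

theorem IsSelfAdjoint.inner_prodL2Conj {X : WithLp 2 (H × G) →L[ℝ] WithLp 2 (H × G)}
    (hX : IsSelfAdjoint X) (z w : H × G) :
    ⟪(prodL2Conj X z).1, w.1⟫_ℝ + ⟪(prodL2Conj X z).2, w.2⟫_ℝ =
      ⟪z.1, (prodL2Conj X w).1⟫_ℝ + ⟪z.2, (prodL2Conj X w).2⟫_ℝ :=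
  hX.isSymmetric _ _

end Transport

theorem S_operators_strongly_positive_general
    {H G : Type*} [NormedAddCommGroup H] [InnerProductSpace ℝ H] [CompleteSpace H]
    [NormedAddCommGroup G] [InnerProductSpace ℝ G] [CompleteSpace G]
    (L : H →L[ℝ] G) (γ₁ γ₂ θ : ℝ) (hγ₁ : 0 < γ₁) (hγ₂ : 0 < γ₂)
    (hcond : 0 < γ₁⁻¹ - γ₂ / 4 * θ ^ 2 * ‖L‖ ^ 2)
    (S₁ S₂ : H × G → H × G)
    (hS₁ : ∀ z : H × G, S₁ z =
      (γ₁⁻¹ • z.1 + (1 - θ) • (ContinuousLinearMap.adjoint L) z.2,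
       (1 - θ) • L z.1 + γ₂⁻¹ • z.2 +
         (γ₁ * (1 - θ) * (2 - θ)) • L ((ContinuousLinearMap.adjoint L) z.2)))
    (hS₂ : ∀ z : H × G, S₂ z =
      (γ₁⁻¹ • z.1 + (γ₂ * (2 - θ)) • (ContinuousLinearMap.adjoint L) (L z.1)
         - (ContinuousLinearMap.adjoint L) z.2,
       -(L z.1) + γ₂⁻¹ • z.2)) :
    (∃ c > (0:ℝ), ∀ z : H × G,
      c * (‖z.1‖ ^ 2 + ‖z.2‖ ^ 2) ≤ ⟪z.1, (S₁ z).1⟫_ℝ + ⟪z.2, (S₁ z).2⟫_ℝ ∧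
      c * (‖z.1‖ ^ 2 + ‖z.2‖ ^ 2) ≤ ⟪z.1, (S₂ z).1⟫_ℝ + ⟪z.2, (S₂ z).2⟫_ℝ) ∧
    (∀ μ : ℝ, μ ∈ Set.Icc (0:ℝ) 1 →
      ∃ T₁ T₂ Sf : H × G → H × G,
        (∀ z, S₁ (T₁ z) = z ∧ T₁ (S₁ z) = z) ∧
        (∀ z, S₂ (T₂ z) = z ∧ T₂ (S₂ z) = z) ∧
        (∀ z, μ • T₁ (Sf z) + (1 - μ) • T₂ (Sf z) = z ∧
          Sf (μ • T₁ z + (1 - μ) • T₂ z) = z) ∧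
        IsLinearMap ℝ Sf ∧
        (∃ Cb : ℝ, ∀ z : H × G,
          ‖(Sf z).1‖ ^ 2 + ‖(Sf z).2‖ ^ 2 ≤ Cb * (‖z.1‖ ^ 2 + ‖z.2‖ ^ 2)) ∧
        (∀ z w : H × G,
          ⟪(Sf z).1, w.1⟫_ℝ + ⟪(Sf z).2, w.2⟫_ℝ =
            ⟪z.1, (Sf w).1⟫_ℝ + ⟪z.2, (Sf w).2⟫_ℝ) ∧
        (∃ c' > (0:ℝ), ∀ z : H × G,
          c' * (‖z.1‖ ^ 2 + ‖z.2‖ ^ 2) ≤ ⟪z.1, (Sf z).1⟫_ℝ + ⟪z.2, (Sf z).2⟫_ℝ)) := by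
  obtain rfl : S₁ = prodL2Conj (opS₁ L γ₁ γ₂ θ) :=
    funext fun z => by rw [hS₁, prodL2Conj_opS₁_apply]
  obtain rfl : S₂ = prodL2Conj (opS₂ L γ₁ γ₂ θ) :=
    funext fun z => by rw [hS₂, prodL2Conj_opS₂_apply]
  have hP₁ := isStronglyPositive_opS₁ L hγ₁ hγ₂ hcond
  have hP₂ := isStronglyPositive_opS₂ L hγ₂ hcond
  refine ⟨?_, fun μ hμ => ?_⟩
  · obtain ⟨c, hc, h⟩ := hP₁.exists_common_bound hP₂
    exact ⟨c, hc, fun z => by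
      simpa only [inner_prodL2Conj_self, norm_toLp_sq] using h (WithLp.toLp 2 z)⟩
  set M := μ • (opS₁ L γ₁ γ₂ θ)⁻¹ʳ + (1 - μ) • (opS₂ L γ₁ γ₂ θ)⁻¹ʳ
  have hM : IsStronglyPositive M := hP₁.ringInverse.convexComb hP₂.ringInverse hμ
  have hMapply : ∀ z, prodL2Conj M z =
      μ • prodL2Conj (opS₁ L γ₁ γ₂ θ)⁻¹ʳ z + (1 - μ) • prodL2Conj (opS₂ L γ₁ γ₂ θ)⁻¹ʳ z := by
    simp [M]
  obtain ⟨c, hc, h⟩ := hM.ringInverse.2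
  refine ⟨prodL2Conj (opS₁ L γ₁ γ₂ θ)⁻¹ʳ, prodL2Conj (opS₂ L γ₁ γ₂ θ)⁻¹ʳ, prodL2Conj M⁻¹ʳ,
    prodL2Conj_mul_inverse_apply hP₁.isUnit, prodL2Conj_mul_inverse_apply hP₂.isUnit,
    fun z => by simpa only [hMapply] using prodL2Conj_mul_inverse_apply hM.isUnit z,
    (prodL2Conj M⁻¹ʳ).toLinearMap.isLinear, ⟨_, norm_sq_prodL2Conj_apply_le _⟩,
    hM.ringInverse.1.inner_prodL2Conj, c, hc, fun z => ?_⟩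
  simpa only [inner_prodL2Conj_self, norm_toLp_sq] using h (WithLp.toLp 2 z)

/-- Lemma 5.5: strong positivity of `S₁`, `S₂` and well-definedness and strong positivity
of `S = (μ S₁⁻¹ + (1 − μ) S₂⁻¹)⁻¹` on `K = H × G`, where the inner product on `K` is
`⟨(x,y),(x',y')⟩ = ⟨x,x'⟩ + ⟨y,y'⟩` and `‖(x,y)‖² = ‖x‖² + ‖y‖²`. -/
theorem S_operators_strongly_positive
    {H G : Type*} [NormedAddCommGroup H] [InnerProductSpace ℝ H] [CompleteSpace H]
    [NormedAddCommGroup G] [InnerProductSpace ℝ G] [CompleteSpace G]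
    (L : H →L[ℝ] G) (γ₁ γ₂ θ : ℝ) (hγ₁ : 0 < γ₁) (hγ₂ : 0 < γ₂) (hθ : 0 ≤ θ)
    (hcond : 0 < γ₁⁻¹ - γ₂ / 4 * θ ^ 2 * ‖L‖ ^ 2)
    (S₁ S₂ : H × G → H × G)
    (hS₁ : ∀ z : H × G, S₁ z =
      (γ₁⁻¹ • z.1 + (1 - θ) • (ContinuousLinearMap.adjoint L) z.2,
       (1 - θ) • L z.1 + γ₂⁻¹ • z.2 +
         (γ₁ * (1 - θ) * (2 - θ)) • L ((ContinuousLinearMap.adjoint L) z.2)))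
    (hS₂ : ∀ z : H × G, S₂ z =
      (γ₁⁻¹ • z.1 + (γ₂ * (2 - θ)) • (ContinuousLinearMap.adjoint L) (L z.1)
         - (ContinuousLinearMap.adjoint L) z.2,
       -(L z.1) + γ₂⁻¹ • z.2)) :
    (∃ c > (0:ℝ), ∀ z : H × G,
      c * (‖z.1‖ ^ 2 + ‖z.2‖ ^ 2) ≤ ⟪z.1, (S₁ z).1⟫_ℝ + ⟪z.2, (S₁ z).2⟫_ℝ ∧
      c * (‖z.1‖ ^ 2 + ‖z.2‖ ^ 2) ≤ ⟪z.1, (S₂ z).1⟫_ℝ + ⟪z.2, (S₂ z).2⟫_ℝ) ∧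
    (∀ μ : ℝ, μ ∈ Set.Icc (0:ℝ) 1 →
      ∃ T₁ T₂ Sf : H × G → H × G,
        (∀ z, S₁ (T₁ z) = z ∧ T₁ (S₁ z) = z) ∧
        (∀ z, S₂ (T₂ z) = z ∧ T₂ (S₂ z) = z) ∧
        (∀ z, μ • T₁ (Sf z) + (1 - μ) • T₂ (Sf z) = z ∧
          Sf (μ • T₁ z + (1 - μ) • T₂ z) = z) ∧
        IsLinearMap ℝ Sf ∧
        (∃ Cb : ℝ, ∀ z : H × G,
          ‖(Sf z).1‖ ^ 2 + ‖(Sf z).2‖ ^ 2 ≤ Cb * (‖z.1‖ ^ 2 + ‖z.2‖ ^ 2)) ∧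
        (∀ z w : H × G,
          ⟪(Sf z).1, w.1⟫_ℝ + ⟪(Sf z).2, w.2⟫_ℝ =
            ⟪z.1, (Sf w).1⟫_ℝ + ⟪z.2, (Sf w).2⟫_ℝ) ∧
        (∃ c' > (0:ℝ), ∀ z : H × G,
          c' * (‖z.1‖ ^ 2 + ‖z.2‖ ^ 2) ≤ ⟪z.1, (Sf z).1⟫_ℝ + ⟪z.2, (Sf z).2⟫_ℝ)) :=
  S_operators_strongly_positive_general L γ₁ γ₂ θ hγ₁ hγ₂ hcond S₁ S₂ hS₁ hS₂
end
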